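/- Let T be a finite set of observations, for each t ∈ T let m^t > 0, p̄^t ∈ ℝ^K_{++}, and let μ^t be a Borel probability measure on the expenditure simplex 𝓔^t = {e ∈ ℝ^K_+ : ∑_k e_k = m^t}. Fix a nonempty R ⊆ K with μ^t({e ∈ 𝓔^t : e_k > 0 for all k ∈ R}) = 1 for each t. Suppose the data set {(μ^t, p̄^t)}_{t∈T} is RPM-rationalizable: there exist a Borel probability measure η on ℝ_{++} and a strictly increasing, strictly concave, continuous utility function u: ℝ^K_+ → ℝ such that, writing p^{λ,t} = (λ p̄^t_R, p̄^t_{−R}) and letting e^{λ,t} denote the unique maximizer of e ↦ u(x(e, p^{λ,t})) over 𝓔^t, the map λ ↦ e^{λ,t} is measurable and μ^t is the pushforward of η under it, for every t. Then {(μ^t, p̄^t)}_{t∈T} is RUM-rationalizable: there exist a probability space (Ω, 𝓕, P) and a family (u_ω)_{ω∈Ω} of strictly increasing, strictly concave, continuous utility functions on ℝ^K_+ such that, letting e^{ω,t} denote the unique maximizer of e ↦ u_ω(x(e, p̄^t)) over 𝓔^t, the map ω ↦ e^{ω,t} is measurable and μ^t is the pushforward of P under it, for every t. -/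

import Mathlib

open Filter Set MeasureTheory

noncomputable section

/-- The inner product `p·x = ∑ k, p k * x k`. -/
def dotp {K : ℕ} (p x : Fin K → ℝ) : ℝ := ∑ k, p k * x k

/-- The implied bundle `x(e,p) = (e_k / p_k)_k`. -/
def demandOf {K : ℕ} (e p : Fin K → ℝ) : Fin K → ℝ := fun k => e k / p k

/-- The budget set `B(p,m) = {x ∈ ℝ^K_+ : p·x ≤ m}`. -/
def budget {K : ℕ} (p : Fin K → ℝ) (m : ℝ) : Set (Fin K → ℝ) :=
  {x | (∀ k, 0 ≤ x k) ∧ dotp p x ≤ m}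

/-- A utility function on `ℝ^K_+`: continuous and strictly increasing. -/
def IsUtility {K : ℕ} (u : (Fin K → ℝ) → ℝ) : Prop :=
  ContinuousOn u {x | ∀ k, 0 ≤ x k} ∧
  ∀ x y : Fin K → ℝ, (∀ k, 0 ≤ x k) → (∀ k, 0 ≤ y k) →
    (∀ k, x k ≤ y k) → (∃ k, x k < y k) → u x < u y

/-- Basic data-set conditions: expenditures are nonnegative with positive total,
and price indices are strictly positive. -/
def IsDataset {N T K : ℕ} (e : Fin N → Fin T → Fin K → ℝ)
    (pbar : Fin T → Fin K → ℝ) : Prop :=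
  (∀ i t k, 0 ≤ e i t k) ∧ (∀ i t, 0 < ∑ k, e i t k) ∧ (∀ t k, 0 < pbar t k)

/-- The expenditure simplex `{e ∈ ℝ^K_+ : ∑ k, e k = m}`. -/
def simplexE {K : ℕ} (m : ℝ) : Set (Fin K → ℝ) := {e | (∀ k, 0 ≤ e k) ∧ ∑ k, e k = m}

/-- A strictly increasing, strictly concave and continuous utility function on `ℝ^K_+`. -/
def IsNiceUtility {K : ℕ} (u : (Fin K → ℝ) → ℝ) : Prop :=
  IsUtility u ∧ StrictConcaveOn ℝ {x : Fin K → ℝ | ∀ k, 0 ≤ x k} u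

/-- The price vector `p^{λ,t}` obtained from `p̄^t` by scaling the coordinates in `R`
by `λ`. -/
def plamR {T K : ℕ} (R : Finset (Fin K)) (pbar : Fin T → Fin K → ℝ) (lam : ℝ)
    (t : Fin T) : Fin K → ℝ :=
  fun k => if k ∈ R then lam * pbar t k else pbar t k

/-! A price multiplier `λ` on the goods in `R` is observationally the same as a taste shock:
facing `p̄ᵗ`, a consumer with utility `x ↦ u(x_R / λ, x_{-R})` ranks expenditure vectors exactly
as the RPM consumer with utility `u` facing `p^{λ,t}`, and this rescaled utility is again strictly
increasing, strictly concave and continuous. Indexing these utilities by `ω ∈ ℝ`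
distributed as `η` turns the RPM rationalization into a RUM one. -/

lemma IsNiceUtility.comp_mul {K : ℕ} {u : (Fin K → ℝ) → ℝ} (hu : IsNiceUtility u)
    {c : Fin K → ℝ} (hc : ∀ k, 0 < c k) : IsNiceUtility fun x => u (c * x) := by
  have hmaps : MapsTo (c * ·) {x : Fin K → ℝ | ∀ k, 0 ≤ x k} {x | ∀ k, 0 ≤ x k} :=
    fun x hx k => mul_nonneg (hc k).le (hx k)
  refine ⟨⟨hu.1.1.comp (continuous_const.mul continuous_id).continuousOn hmaps, ?_⟩, hu.2.1, ?_⟩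
  · rintro x y hx hy hxy ⟨k, hk⟩
    exact hu.1.2 _ _ (hmaps hx) (hmaps hy) (fun k => mul_le_mul_of_nonneg_left (hxy k) (hc k).le)
      ⟨k, mul_lt_mul_of_pos_left hk (hc k)⟩
  · intro x hx y hy hxy a b ha hb hab
    have hne : c * x ≠ c * y := fun h =>
      hxy (funext fun k => mul_left_cancel₀ (hc k).ne' (congrFun h k))
    have hlin : c * (a • x + b • y) = a • (c * x) + b • (c * y) := by
      rw [mul_add, mul_smul_comm, mul_smul_comm]
    simpa only [hlin] using hu.2.2 (hmaps hx) (hmaps hy) hne ha hb hab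

lemma demandOf_mul {K : ℕ} (e c p : Fin K → ℝ) : demandOf e (c * p) = c⁻¹ * demandOf e p := by
  funext k
  simp only [demandOf, Pi.mul_apply, Pi.inv_apply]
  ring

def scaleOn {K : ℕ} (R : Finset (Fin K)) (lam : ℝ) : Fin K → ℝ :=
  fun k => if k ∈ R then lam else 1

lemma scaleOn_pos {K : ℕ} (R : Finset (Fin K)) {lam : ℝ} (hlam : 0 < lam) (k : Fin K) :
    0 < scaleOn R lam k := by
  unfold scaleOn
  split_ifs
  exacts [hlam, one_pos]

lemma plamR_eq_scaleOn_mul {T K : ℕ} (R : Finset (Fin K)) (pbar : Fin T → Fin K → ℝ)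
    (lam : ℝ) (t : Fin T) : plamR R pbar lam t = scaleOn R lam * pbar t := by
  funext k
  simp only [plamR, scaleOn, Pi.mul_apply]
  split_ifs <;> ring

lemma ae_pos_of_measure_Ioi_eq_one {η : Measure ℝ} [IsProbabilityMeasure η]
    (h : η (Ioi 0) = 1) : ∀ᵐ lam ∂η, 0 < lam :=
  mem_ae_iff.2 ((prob_compl_eq_zero_iff measurableSet_Ioi).2 h)

theorem rpm_implies_rum_general {T K : ℕ}
    (m : Fin T → ℝ)
    (pbar : Fin T → Fin K → ℝ)
    (μ : Fin T → Measure (Fin K → ℝ))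
    (R : Finset (Fin K))
    (hRPM : ∃ (η : Measure ℝ) (_ : IsProbabilityMeasure η)
        (u : (Fin K → ℝ) → ℝ) (E : ℝ → Fin T → (Fin K → ℝ)),
        η (Set.Ioi (0 : ℝ)) = 1 ∧ IsNiceUtility u ∧
        (∀ lam : ℝ, 0 < lam → ∀ t, E lam t ∈ simplexE (m t) ∧
          ∀ e ∈ simplexE (m t),
            u (demandOf e (plamR R pbar lam t)) ≤
              u (demandOf (E lam t) (plamR R pbar lam t))) ∧
        (∀ t, Measurable fun lam => E lam t) ∧
        (∀ t, μ t = η.map fun lam => E lam t)) :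
    ∃ (Ω : Type) (_ : MeasurableSpace Ω) (P : Measure Ω)
      (_ : IsProbabilityMeasure P)
      (u : Ω → (Fin K → ℝ) → ℝ) (E : Ω → Fin T → (Fin K → ℝ)),
      (∀ ω, IsNiceUtility (u ω)) ∧
      (∀ ω t, E ω t ∈ simplexE (m t) ∧
        ∀ e ∈ simplexE (m t),
          u ω (demandOf e (pbar t)) ≤ u ω (demandOf (E ω t) (pbar t))) ∧
      (∀ t, Measurable fun ω => E ω t) ∧
      (∀ t, μ t = P.map fun ω => E ω t) := by
  obtain ⟨η, hη, u, E, hη_pos, hu, hE_max, hE_meas, hμ⟩ := hRPM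
  -- `Ω = ℝ` carries the law `η`; the η-null set `ω ≤ 0` is sent to `λ = 1`.
  let lamOf : ℝ → ℝ := fun ω => if 0 < ω then ω else 1
  have hlamOf_pos (ω : ℝ) : 0 < lamOf ω := by
    dsimp only [lamOf]
    split_ifs with h
    exacts [h, one_pos]
  refine ⟨ℝ, inferInstance, η, hη, fun ω x => u ((scaleOn R (lamOf ω))⁻¹ * x),
    fun ω t => E (lamOf ω) t,
    fun ω => hu.comp_mul fun k => inv_pos.2 (scaleOn_pos R (hlamOf_pos ω) k),
    fun ω t => ?_, fun t => (hE_meas t).comp ?_, fun t => ?_⟩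
  · simpa only [← demandOf_mul, ← plamR_eq_scaleOn_mul] using hE_max _ (hlamOf_pos ω) t
  · exact Measurable.ite measurableSet_Ioi measurable_id measurable_const
  · rw [hμ t]
    refine Measure.map_congr ((ae_pos_of_measure_Ioi_eq_one hη_pos).mono fun ω hω => ?_)
    simp only [lamOf, if_pos hω]

/-- Proposition 8, first part: if a (possibly non-discrete)
cross-sectional data set is RPM-rationalizable, then it is RUM-rationalizable. -/
theorem rpm_implies_rum {T K : ℕ}
    (m : Fin T → ℝ) (hm : ∀ t, 0 < m t)
    (pbar : Fin T → Fin K → ℝ) (hpbar : ∀ t k, 0 < pbar t k)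
    (μ : Fin T → Measure (Fin K → ℝ)) (hprob : ∀ t, IsProbabilityMeasure (μ t))
    (R : Finset (Fin K)) (hR : R.Nonempty)
    (hsupp : ∀ t, μ t {e | e ∈ simplexE (m t) ∧ ∀ k ∈ R, 0 < e k} = 1)
    (hRPM : ∃ (η : Measure ℝ) (_ : IsProbabilityMeasure η)
        (u : (Fin K → ℝ) → ℝ) (E : ℝ → Fin T → (Fin K → ℝ)),
        η (Set.Ioi (0 : ℝ)) = 1 ∧ IsNiceUtility u ∧
        (∀ lam : ℝ, 0 < lam → ∀ t, E lam t ∈ simplexE (m t) ∧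
          ∀ e ∈ simplexE (m t),
            u (demandOf e (plamR R pbar lam t)) ≤
              u (demandOf (E lam t) (plamR R pbar lam t))) ∧
        (∀ t, Measurable fun lam => E lam t) ∧
        (∀ t, μ t = η.map fun lam => E lam t)) :
    ∃ (Ω : Type) (_ : MeasurableSpace Ω) (P : Measure Ω)
      (_ : IsProbabilityMeasure P)
      (u : Ω → (Fin K → ℝ) → ℝ) (E : Ω → Fin T → (Fin K → ℝ)),
      (∀ ω, IsNiceUtility (u ω)) ∧
      (∀ ω t, E ω t ∈ simplexE (m t) ∧
        ∀ e ∈ simplexE (m t),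
          u ω (demandOf e (pbar t)) ≤ u ω (demandOf (E ω t) (pbar t))) ∧
      (∀ t, Measurable fun ω => E ω t) ∧
      (∀ t, μ t = P.map fun ω => E ω t) :=
  rpm_implies_rum_general m pbar μ R hRPM
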